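/- Let φ be a positive non-decreasing function with Σ_k 1/(k φ(k)) < ∞. Then for Lebesgue-almost every α ∈ (0,1), limsup_{M→∞} [Σ_{m=1}^M 1/‖mα‖] / (M log M · φ(log M)) = 0. -/

import Mathlib

open Filter MeasureTheory Real

/-- Distance from `x` to the nearest integer. -/
noncomputable def nd (x : ℝ) : ℝ := |x - round x|

/-- The Gauss map `x ↦ frac (1/x)` (with `0 ↦ 0`). -/
noncomputable def gaussMap (x : ℝ) : ℝ := Int.fract x⁻¹

/-- The `k`-th partial quotient of the continued fraction of `α` (for `k ≥ 1`). -/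
noncomputable def cfA (α : ℝ) (k : ℕ) : ℕ := ⌊(gaussMap^[k-1] α)⁻¹⌋₊

/-- Denominators of the continued fraction convergents of `α`. -/
noncomputable def cfQ (α : ℝ) : ℕ → ℕ
  | 0 => 1
  | 1 => cfA α 1
  | (k+2) => cfA α (k+2) * cfQ α (k+1) + cfQ α k

/-- Numerators of the continued fraction convergents of `α`. -/
noncomputable def cfP (α : ℝ) : ℕ → ℕ
  | 0 => 0
  | 1 => 1
  | (k+2) => cfA α (k+2) * cfP α (k+1) + cfP α k

/-- `S α M = ∑_{m=1}^M 1/‖mα‖`. -/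
noncomputable def S (α : ℝ) (M : ℕ) : ℝ := ∑ m ∈ Finset.Icc 1 M, 1 / nd (m * α)

/-!
Let `α ∈ (0,1)` be irrational with convergent denominators `q_k`, partial quotients `a_k`, and
let `q_K ≤ M < q_{K+1}`. By best approximation `‖mα‖ ≥ ‖q_K α‖ ≥ 1/(2q_{K+1})` for `1 ≤ m ≤ M`,
and among any `q_K` consecutive integers the points `mα` are `δ`-separated modulo one, with
`δ = ‖q_{K-1} α‖ ≥ 1/(2q_K)`. So each layer `jδ ≤ ‖mα‖ < (j+1)δ` holds at most two of them per
block, and summing `1/‖mα‖` layer by layer gives `S α M ≤ 8M (2 + log M + a_{K+1})`.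

Since `q_k ≥ 2^{k/2}`, `K/4 ≤ log M`. The Gauss measure is `gaussMap`-invariant and comparable
to Lebesgue measure, so `λ(a_{k+1} > c) ≤ 2/c`; by Borel–Cantelli and `∑ 1/(kφ(k)) < ∞`, almost
surely `a_{k+1} ≤ 1 + ε (k/4) φ(k/4)` eventually, for every `ε > 0`. Then
`S α M ≤ 8M (3 + log M) + 8ε M log M φ(log M)`, and `φ → ∞` because of the summability.
-/

open Finset Topology

lemma nd_le_abs_sub (x : ℝ) (z : ℤ) : nd x ≤ |x - z| := round_le x z

lemma nd_neg (x : ℝ) : nd (-x) = nd x := by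
  refine le_antisymm ?_ ?_
  · calc nd (-x) ≤ |-x - ((-round x : ℤ) : ℝ)| := nd_le_abs_sub _ _
      _ = nd x := by rw [nd, ← abs_neg]; push_cast; ring_nf
  · calc nd x ≤ |x - ((-round (-x) : ℤ) : ℝ)| := nd_le_abs_sub _ _
      _ = nd (-x) := by rw [nd, ← abs_neg]; push_cast; ring_nf

lemma nd_sub_le_abs_fract_sub (x y : ℝ) : nd (x - y) ≤ |Int.fract x - Int.fract y| := by
  have h := nd_le_abs_sub (x - y) (⌊x⌋ - ⌊y⌋)
  rwa [show x - y - ((⌊x⌋ - ⌊y⌋ : ℤ) : ℝ) = Int.fract x - Int.fract y by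
    push_cast [Int.fract]; ring] at h

lemma ne_zero_and_mul_nonpos_of_eq_add {u v Q Q' m : ℤ} (hQ : 0 < Q) (hm0 : 0 < m)
    (hmQ : m < Q') (h : m = u * Q + v * Q') : u ≠ 0 ∧ u * v ≤ 0 := by
  refine ⟨?_, ?_⟩
  · rintro rfl
    rcases le_or_gt v 0 with hv | hv <;> nlinarith
  · rcases le_or_gt u 0 with hu | hu <;> rcases le_or_gt v 0 with hv | hv <;> nlinarith

lemma card_le_two_of_nd_mem_Ico {ι : Type*} (V : Finset ι) (x : ι → ℝ) {c δ : ℝ}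
    (hsep : ∀ i ∈ V, ∀ j ∈ V, i ≠ j → δ ≤ nd (x i - x j))
    (hx : ∀ i ∈ V, nd (x i) ∈ Set.Ico c (c + δ)) : #V ≤ 2 := by
  classical
  have hsame : ∀ i ∈ V, ∀ j ∈ V,
      (Int.fract (x i) < c + δ ↔ Int.fract (x j) < c + δ) → i = j := by
    intro i hi j hj hij
    by_contra hne
    have hfar := (hsep i hi j hj hne).trans (nd_sub_le_abs_fract_sub (x i) (x j))
    have hxi := hx i hi
    have hxj := hx j hj
    simp only [nd, abs_sub_round_eq_min, Set.mem_Ico, le_min_iff, min_lt_iff] at hxi hxj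
    have hclose : |Int.fract (x i) - Int.fract (x j)| < δ := by
      rw [abs_lt]
      by_cases h : Int.fract (x i) < c + δ
      · have h' := hij.1 h
        constructor <;> linarith
      · have hi' := hxi.2.resolve_left h
        have hj' := hxj.2.resolve_left (mt hij.2 h)
        constructor <;> linarith
    linarith
  rw [← card_filter_add_card_filter_not (fun i => Int.fract (x i) < c + δ)]
  have hle : ∀ p : Prop, #(V.filter fun i => (Int.fract (x i) < c + δ ↔ p)) ≤ 1 := fun p =>
    card_le_one.2 fun i hi j hj => by
      rw [mem_filter] at hi hj
      exact hsame i hi.1 j hj.1 (hi.2.trans hj.2.symm)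
  have h1 := hle True
  have h2 := hle False
  simp only [iff_true, iff_false] at h1 h2
  omega

lemma sum_one_div_le_of_card_layer_le {ι : Type*} (V : Finset ι) (f : ι → ℝ) {γ δ : ℝ}
    (hγ : 0 < γ) (hδ : 0 < δ) (T R : ℕ) (hγf : ∀ i ∈ V, γ ≤ f i)
    (hfT : ∀ i ∈ V, f i < (T + 1) * δ)
    (hR : ∀ j : ℕ, #{i ∈ V | f i ∈ Set.Ico (j * δ) ((j + 1) * δ)} ≤ R) :
    ∑ i ∈ V, 1 / f i ≤ R * (1 / γ + harmonic T / δ) := by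
  classical
  have hf0 : ∀ i ∈ V, 0 ≤ f i / δ := fun i hi => div_nonneg (hγ.le.trans (hγf i hi)) hδ.le
  have hmaps : ∀ i ∈ V, ⌊f i / δ⌋₊ ∈ range (T + 1) := fun i hi => by
    rw [mem_range, Nat.floor_lt (hf0 i hi), div_lt_iff₀ hδ]
    exact_mod_cast hfT i hi
  have hmem : ∀ j : ℕ,
      {i ∈ V | ⌊f i / δ⌋₊ = j} ⊆ {i ∈ V | f i ∈ Set.Ico (j * δ) ((j + 1) * δ)} := by
    intro j i hi
    rw [mem_filter] at hi ⊢
    have := (Nat.floor_eq_iff (hf0 i hi.1)).1 hi.2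
    rw [le_div_iff₀ hδ, div_lt_iff₀ hδ] at this
    exact ⟨hi.1, this⟩
  have hfiber : ∀ j : ℕ, ∑ i ∈ {i ∈ V | ⌊f i / δ⌋₊ = j}, 1 / f i ≤ R * (1 / max γ (j * δ)) := by
    intro j
    calc ∑ i ∈ {i ∈ V | ⌊f i / δ⌋₊ = j}, 1 / f i
        ≤ #{i ∈ V | ⌊f i / δ⌋₊ = j} • (1 / max γ (j * δ)) :=
          sum_le_card_nsmul _ _ _ fun i hi => one_div_le_one_div_of_le (lt_max_of_lt_left hγ)
            (max_le (hγf i (mem_filter.1 hi).1) (mem_filter.1 (hmem j hi)).2.1)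
      _ ≤ R * (1 / max γ (j * δ)) := by
          rw [nsmul_eq_mul]
          gcongr
          exact_mod_cast (card_le_card (hmem j)).trans (hR j)
  have hharm : ∑ j ∈ range (T + 1), 1 / max γ (j * δ) ≤ 1 / γ + harmonic T / δ := by
    rw [sum_range_succ', add_comm]
    simp only [Nat.cast_zero, zero_mul, max_eq_left hγ.le, harmonic, Rat.cast_sum,
      Rat.cast_inv, Rat.cast_natCast, sum_div]
    refine add_le_add_right (sum_le_sum fun j _ => ?_) _
    calc 1 / max γ (↑(j + 1) * δ) ≤ 1 / (↑(j + 1) * δ) :=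
          one_div_le_one_div_of_le (by positivity) (le_max_right _ _)
      _ = (↑(j + 1))⁻¹ / δ := by ring
  calc ∑ i ∈ V, 1 / f i = ∑ j ∈ range (T + 1), ∑ i ∈ {i ∈ V | ⌊f i / δ⌋₊ = j}, 1 / f i :=
        (sum_fiberwise_of_maps_to hmaps _).symm
    _ ≤ ∑ j ∈ range (T + 1), R * (1 / max γ (j * δ)) := sum_le_sum fun j _ => hfiber j
    _ ≤ R * (1 / γ + harmonic T / δ) := by rw [← mul_sum]; gcongr

lemma irrational_gaussMap {x : ℝ} (hx : Irrational x) : Irrational (gaussMap x) := by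
  simpa only [gaussMap, Int.fract] using hx.inv.sub_intCast ⌊x⁻¹⌋

lemma gaussMap_pos_of_irrational {x : ℝ} (hx : Irrational x) : 0 < gaussMap x :=
  (Int.fract_nonneg _).lt_of_ne fun h =>
    (irrational_gaussMap hx).ne_int 0 (by rw [gaussMap, ← h, Int.cast_zero])

lemma inv_eq_floor_add_gaussMap {x : ℝ} (hx : 0 ≤ x) : x⁻¹ = ⌊x⁻¹⌋₊ + gaussMap x := by
  rw [gaussMap, natCast_floor_eq_intCast_floor (inv_nonneg.2 hx), Int.floor_add_fract]

/-- For `k ≥ 1` this is `|q_{k-1} α - p_{k-1}|`, see `cfQ_mul_sub_cfP`. -/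
noncomputable def gaussProd (α : ℝ) (k : ℕ) : ℝ := ∏ i ∈ range k, gaussMap^[i] α

lemma gaussProd_zero (α : ℝ) : gaussProd α 0 = 1 := prod_range_zero _

lemma gaussProd_succ (α : ℝ) (k : ℕ) : gaussProd α (k + 1) = gaussProd α k * gaussMap^[k] α :=
  prod_range_succ _ _

lemma gaussProd_one (α : ℝ) : gaussProd α 1 = α := by simp [gaussProd_succ, gaussProd_zero]

lemma cfP_mul_cfQ_sub (α : ℝ) (k : ℕ) :
    (cfP α (k + 1) * cfQ α k - cfP α k * cfQ α (k + 1) : ℤ) = (-1) ^ k := by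
  induction k with
  | zero => simp [cfP, cfQ]
  | succ k ih =>
    simp only [cfP, cfQ, Nat.cast_add, Nat.cast_mul] at ih ⊢
    linear_combination -ih

lemma gaussMap_iterate_mem_Ico {y : ℝ} (hy : y ∈ Set.Ico 0 1) (k : ℕ) :
    gaussMap^[k] y ∈ Set.Ico 0 1 := by
  cases k with
  | zero => exact hy
  | succ k =>
    rw [Function.iterate_succ_apply']
    exact ⟨Int.fract_nonneg _, Int.fract_lt_one _⟩

lemma exists_mem_Ioo_of_gaussMap_mem_Ioo {x a b : ℝ} (hx : x ∈ Set.Ico 0 1) (ha : 0 ≤ a)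
    (h : gaussMap x ∈ Set.Ioo a b) : ∃ n : ℕ, x ∈ Set.Ioo (1 / (n + 1 + b)) (1 / (n + 1 + a)) := by
  have hx0 : 0 < x := hx.1.lt_of_ne <| by
    rintro rfl
    simp only [gaussMap, inv_zero, Int.fract_zero, Set.mem_Ioo] at h
    linarith [h.1]
  have hinv := inv_eq_floor_add_gaussMap hx.1
  have hN : 1 ≤ ⌊x⁻¹⌋₊ := Nat.one_le_floor_iff _ |>.2 ((one_le_inv₀ hx0).2 hx.2.le)
  refine ⟨⌊x⁻¹⌋₊ - 1, ?_⟩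
  rw [Nat.cast_sub hN, Nat.cast_one, sub_add_cancel]
  have hN' : (1 : ℝ) ≤ ⌊x⁻¹⌋₊ := by exact_mod_cast hN
  refine ⟨(one_div_lt (by linarith [h.1.trans h.2]) hx0).2 ?_,
    (lt_one_div hx0 (show (0 : ℝ) < ⌊x⁻¹⌋₊ + a by linarith)).2 ?_⟩ <;>
    rw [one_div] <;> linarith [h.1, h.2]

lemma sub_le_two_mul_log_sub {a b : ℝ} (ha : 0 ≤ a) (hab : a ≤ b) (hb : b ≤ 1) :
    b - a ≤ 2 * (log (1 + b) - log (1 + a)) := by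
  have hb0 : 0 ≤ b := ha.trans hab
  have h := Real.one_sub_inv_le_log_of_pos (x := (1 + b) / (1 + a)) (by positivity)
  rw [Real.log_div (by positivity) (by positivity), inv_div,
    show 1 - (1 + a) / (1 + b) = (b - a) / (1 + b) by field_simp; ring] at h
  have : (b - a) / 2 ≤ (b - a) / (1 + b) :=
    div_le_div_of_nonneg_left (by linarith) (by linarith) (by linarith)
  linarith

lemma log_one_add_one_div {x : ℝ} (hx : 0 < x) : log (1 + 1 / x) = log (x + 1) - log x := by
  rw [show 1 + 1 / x = (x + 1) / x by field_simp, Real.log_div (by positivity) hx.ne']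

lemma sum_range_two_mul_log_sub_le {a b : ℝ} (ha : 0 ≤ a) (hab : a ≤ b) (N : ℕ) :
    ∑ n ∈ range N, 2 * (log (1 + 1 / (n + 1 + a)) - log (1 + 1 / (n + 1 + b)))
      ≤ 2 * (log (1 + b) - log (1 + a)) := by
  have hb : 0 ≤ b := ha.trans hab
  set g : ℕ → ℝ := fun n => 2 * (log (n + 1 + b) - log (n + 1 + a))
  have htele : ∑ n ∈ range N, 2 * (log (1 + 1 / (n + 1 + a)) - log (1 + 1 / (n + 1 + b)))
      = g 0 - g N := by
    rw [← sum_range_sub']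
    refine sum_congr rfl fun n _ => ?_
    simp only [g, log_one_add_one_div (show (0 : ℝ) < n + 1 + a by positivity),
      log_one_add_one_div (show (0 : ℝ) < n + 1 + b by positivity)]
    push_cast
    ring_nf
  have : log (N + 1 + a) ≤ log (N + 1 + b) := Real.log_le_log (by positivity) (by linarith)
  simp only [htele, g, Nat.cast_zero, zero_add]
  linarith

lemma Ioo_inter_gaussMap_iterate_succ_preimage_subset (k : ℕ) {a b : ℝ} (ha : 0 ≤ a) :
    Set.Ioo 0 1 ∩ gaussMap^[k + 1] ⁻¹' Set.Ioo a b
      ⊆ ⋃ n : ℕ, Set.Ioo 0 1 ∩ gaussMap^[k] ⁻¹' Set.Ioo (1 / (n + 1 + b)) (1 / (n + 1 + a)) := by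
  rintro y ⟨hy, hyk⟩
  rw [Set.mem_preimage, Function.iterate_succ_apply'] at hyk
  obtain ⟨n, hn⟩ := exists_mem_Ioo_of_gaussMap_mem_Ioo
    (gaussMap_iterate_mem_Ico ⟨hy.1.le, hy.2⟩ k) ha hyk
  exact Set.mem_iUnion.2 ⟨n, hy, hn⟩

/-- `log (1 + b) - log (1 + a)` is `log 2` times the Gauss measure of `(a, b)`, which is
`gaussMap`-invariant. -/
lemma volume_Ioo_inter_gaussMap_iterate_preimage_le (k : ℕ) {a b : ℝ} (ha : 0 ≤ a) (hab : a ≤ b)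
    (hb : b ≤ 1) : volume (Set.Ioo 0 1 ∩ gaussMap^[k] ⁻¹' Set.Ioo a b)
      ≤ ENNReal.ofReal (2 * (log (1 + b) - log (1 + a))) := by
  induction k generalizing a b with
  | zero =>
    calc volume (Set.Ioo 0 1 ∩ gaussMap^[0] ⁻¹' Set.Ioo a b) ≤ volume (Set.Ioo a b) :=
          measure_mono Set.inter_subset_right
      _ = ENNReal.ofReal (b - a) := Real.volume_Ioo
      _ ≤ _ := ENNReal.ofReal_le_ofReal (sub_le_two_mul_log_sub ha hab hb)
  | succ k ih =>
    have hb0 : 0 ≤ b := ha.trans hab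
    set t : ℕ → ℝ := fun n => 2 * (log (1 + 1 / (n + 1 + a)) - log (1 + 1 / (n + 1 + b)))
    have hterm : ∀ n : ℕ, volume (Set.Ioo 0 1 ∩
        gaussMap^[k] ⁻¹' Set.Ioo (1 / (n + 1 + b)) (1 / (n + 1 + a))) ≤ ENNReal.ofReal (t n) :=
      fun n => ih (by positivity) (one_div_le_one_div_of_le (by positivity) (by linarith))
        ((div_le_one (by positivity)).2 (by linarith [(n.cast_nonneg : (0 : ℝ) ≤ n)]))
    have ht0 : ∀ n : ℕ, 0 ≤ t n := fun n => by
      have : 1 / (n + 1 + b) ≤ 1 / (n + 1 + a) :=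
        one_div_le_one_div_of_le (by positivity) (by linarith)
      simp only [t]
      linarith [Real.log_le_log (by positivity)
        (show 1 + 1 / (n + 1 + b) ≤ 1 + 1 / (n + 1 + a) by linarith)]
    calc volume (Set.Ioo 0 1 ∩ gaussMap^[k + 1] ⁻¹' Set.Ioo a b)
        ≤ ∑' n : ℕ, volume (Set.Ioo 0 1 ∩
            gaussMap^[k] ⁻¹' Set.Ioo (1 / (n + 1 + b)) (1 / (n + 1 + a))) :=
          (measure_mono (Ioo_inter_gaussMap_iterate_succ_preimage_subset k ha)).trans
            (measure_iUnion_le _)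
      _ ≤ ∑' n : ℕ, ENNReal.ofReal (t n) := ENNReal.tsum_le_tsum hterm
      _ ≤ _ := ENNReal.tsum_le_of_sum_range_le fun N => by
          rw [← ENNReal.ofReal_sum_of_nonneg fun n _ => ht0 n]
          exact ENNReal.ofReal_le_ofReal (sum_range_two_mul_log_sub_le ha hab N)

lemma volume_lt_cfA_inter_Ioo_le (k : ℕ) {c : ℝ} (hc : 1 ≤ c) :
    volume ({y | c < cfA y (k + 1)} ∩ Set.Ioo 0 1) ≤ ENNReal.ofReal (2 / c) := by
  have hc0 : 0 < c := by linarith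
  have hsub : {y | c < cfA y (k + 1)} ∩ Set.Ioo 0 1
      ⊆ Set.Ioo 0 1 ∩ gaussMap^[k] ⁻¹' Set.Ioo 0 (1 / c) := by
    rintro y ⟨hcy, hy⟩
    have hx := gaussMap_iterate_mem_Ico ⟨hy.1.le, hy.2⟩ k
    simp only [Set.mem_ofPred_eq, cfA, Nat.add_sub_cancel] at hcy
    have hinv : c < (gaussMap^[k] y)⁻¹ := hcy.trans_le (Nat.floor_le (inv_nonneg.2 hx.1))
    have hpos : 0 < gaussMap^[k] y := inv_pos.1 (hc0.trans hinv)
    exact ⟨hy, hpos, (lt_one_div hpos hc0).2 (by rwa [one_div])⟩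
  refine (measure_mono hsub).trans <| (volume_Ioo_inter_gaussMap_iterate_preimage_le k
    le_rfl (by positivity) ((div_le_one hc0).2 hc)).trans (ENNReal.ofReal_le_ofReal ?_)
  have := Real.log_le_sub_one_of_pos (show 0 < 1 + 1 / c by positivity)
  rw [add_zero, Real.log_one]
  linarith [show 2 * (1 / c) = 2 / c by ring]

lemma ae_restrict_eventually_cfA_le (u : ℕ → ℝ) (hu : ∀ k, 1 ≤ u k)
    (hsum : Summable fun k => 1 / u k) :
    ∀ᵐ y ∂volume.restrict (Set.Ioo 0 1), ∀ᶠ k in atTop, (cfA y (k + 1) : ℝ) ≤ u k := by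
  have hfin : ∑' k, volume.restrict (Set.Ioo 0 1) {y | u k < cfA y (k + 1)} ≠ ⊤ := by
    simp only [Measure.restrict_apply' measurableSet_Ioo]
    refine ne_top_of_le_ne_top ?_
      (ENNReal.tsum_le_tsum fun k => volume_lt_cfA_inter_Ioo_le k (hu k))
    rw [← ENNReal.ofReal_tsum_of_nonneg (fun k => by have := hu k; positivity)
      (by simpa only [mul_one_div] using hsum.mul_left 2)]
    exact ENNReal.ofReal_ne_top
  filter_upwards [ae_eventually_notMem hfin] with y hy
  exact hy.mono fun k hk => not_lt.1 hk

lemma ae_irrational : ∀ᵐ x : ℝ, Irrational x :=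
  ae_iff.2 <| measure_mono_null (fun _ hx => not_not.1 hx) ((Set.countable_range _).measure_zero _)

lemma Summable.comp_div_nat {v : ℕ → ℝ} (hv : Summable v) (hv0 : 0 ≤ v) (d : ℕ) [NeZero d] :
    Summable fun k => v (k / d) := by
  rw [← (Nat.divModEquiv d).symm.summable_iff]
  convert hv.mul_of_nonneg (.of_finite (f := fun _ : Fin d => (1 : ℝ))) hv0 (fun _ => zero_le_one)
    using 2 with p
  simp [Nat.add_comm, Nat.add_mul_div_right _ _ (NeZero.pos d), Nat.div_eq_of_lt p.2.is_lt]

lemma tendsto_atTop_of_summable_one_div_mul {φ : ℝ → ℝ} (hpos : ∀ x, 0 < φ x)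
    (hmono : Monotone φ) (hsum : Summable fun k : ℕ => 1 / ((k : ℝ) * φ k)) :
    Tendsto φ atTop atTop := by
  refine tendsto_atTop_atTop_of_monotone hmono fun b => ?_
  by_contra! hb
  refine Real.not_summable_one_div_natCast <| (hsum.mul_left b).of_nonneg_of_le
    (fun k => by positivity) fun k => ?_
  rcases k.eq_zero_or_pos with rfl | hk
  · simp
  · have hk' : (0 : ℝ) < k := by exact_mod_cast hk
    rw [mul_one_div, div_le_div_iff₀ hk' (mul_pos hk' (hpos k))]
    nlinarith [hb k]

lemma summable_one_div_one_add_mul {φ : ℝ → ℝ} (hpos : ∀ x, 0 < φ x)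
    (hsum : Summable fun k : ℕ => 1 / ((k : ℝ) * φ k)) {c : ℝ} (hc : 0 < c) :
    Summable fun k : ℕ => 1 / (1 + c * ((k / 4 : ℕ) * φ (k / 4 : ℕ))) := by
  refine ((hsum.comp_div_nat (fun j => by have := hpos j; positivity) 4).mul_left c⁻¹)
    |>.of_norm_bounded_eventually_nat ?_
  filter_upwards [eventually_ge_atTop 4] with k hk
  have hw : (1 : ℝ) ≤ (k / 4 : ℕ) := by exact_mod_cast (Nat.le_div_iff_mul_le (by norm_num)).2 hk
  have hφ := hpos (k / 4 : ℕ)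
  rw [Real.norm_of_nonneg (by positivity), ← one_div, one_div_mul_one_div]
  exact one_div_le_one_div_of_le (by positivity) (by linarith)

noncomputable def cfIndex (α : ℝ) (M : ℕ) : ℕ := Nat.findGreatest (fun k => cfQ α k ≤ M) M

lemma cfQ_cfIndex_le {α : ℝ} {M : ℕ} (hM : 1 ≤ M) : cfQ α (cfIndex α M) ≤ M :=
  Nat.findGreatest_spec (P := fun k => cfQ α k ≤ M) (Nat.zero_le M) hM

section IrrationalRotation

variable {α : ℝ} (hα : Irrational α) (hα01 : α ∈ Set.Ioo 0 1)
include hα hα01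

lemma gaussMap_iterate_mem_Ioo (k : ℕ) : gaussMap^[k] α ∈ Set.Ioo 0 1 := by
  cases k with
  | zero => exact hα01
  | succ k =>
    have hk : Irrational (gaussMap^[k] α) := by
      induction k with
      | zero => exact hα
      | succ k ih => rw [Function.iterate_succ_apply']; exact irrational_gaussMap ih
    rw [Function.iterate_succ_apply']
    exact ⟨gaussMap_pos_of_irrational hk, Int.fract_lt_one _⟩

lemma inv_gaussMap_iterate (k : ℕ) :
    (gaussMap^[k] α)⁻¹ = cfA α (k + 1) + gaussMap^[k + 1] α := by
  rw [Function.iterate_succ_apply', cfA, Nat.add_sub_cancel]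
  exact inv_eq_floor_add_gaussMap (gaussMap_iterate_mem_Ioo hα hα01 k).1.le

lemma one_le_cfA (k : ℕ) : 1 ≤ cfA α (k + 1) := by
  have hx := gaussMap_iterate_mem_Ioo hα hα01 k
  rw [cfA, Nat.add_sub_cancel, Nat.one_le_floor_iff]
  exact (one_lt_inv₀ hx.1).2 hx.2 |>.le

lemma gaussProd_pos (k : ℕ) : 0 < gaussProd α k :=
  prod_pos fun i _ => (gaussMap_iterate_mem_Ioo hα hα01 i).1

lemma gaussProd_succ_le (k : ℕ) : gaussProd α (k + 1) ≤ gaussProd α k := by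
  rw [gaussProd_succ]
  exact mul_le_of_le_one_right (gaussProd_pos hα hα01 k).le
    (gaussMap_iterate_mem_Ioo hα hα01 k).2.le

lemma gaussProd_eq_cfA_mul_add (k : ℕ) :
    gaussProd α k = cfA α (k + 1) * gaussProd α (k + 1) + gaussProd α (k + 2) := by
  have hx := (gaussMap_iterate_mem_Ioo hα hα01 k).1.ne'
  have hinv := inv_gaussMap_iterate hα hα01 k
  rw [gaussProd_succ, gaussProd_succ, gaussProd_succ]
  field_simp at hinv
  linear_combination gaussProd α k * hinv

lemma cfQ_pos (k : ℕ) : 0 < cfQ α k := by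
  induction k using Nat.strong_induction_on with
  | _ k ih =>
    match k with
    | 0 => exact Nat.one_pos
    | 1 => exact one_le_cfA hα hα01 0
    | k + 2 => rw [cfQ]; have := ih k (by omega); positivity

lemma cfQ_le_cfQ_succ (k : ℕ) : cfQ α k ≤ cfQ α (k + 1) := by
  match k with
  | 0 => exact one_le_cfA hα hα01 0
  | k + 1 =>
    rw [cfQ]
    nlinarith [one_le_cfA hα hα01 (k + 1), cfQ_pos hα hα01 k]

lemma cfQ_succ_le (k : ℕ) : cfQ α (k + 1) ≤ (cfA α (k + 1) + 1) * cfQ α k := by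
  match k with
  | 0 => simp [cfQ]
  | k + 1 =>
    rw [cfQ]
    nlinarith [cfQ_le_cfQ_succ hα hα01 k]

lemma two_pow_le_cfQ (k : ℕ) : 2 ^ (k / 2) ≤ cfQ α k := by
  induction k using Nat.strong_induction_on with
  | _ k ih =>
    match k with
    | 0 => simp [cfQ]
    | 1 => exact one_le_cfA hα hα01 0
    | k + 2 =>
      rw [cfQ, show (k + 2) / 2 = k / 2 + 1 by omega, pow_succ]
      nlinarith [ih k (by omega), one_le_cfA hα hα01 (k + 1), cfQ_le_cfQ_succ hα hα01 k]

lemma cfQ_mul_gaussProd_add (k : ℕ) :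
    (cfQ α (k + 1) : ℝ) * gaussProd α (k + 1) + cfQ α k * gaussProd α (k + 2) = 1 := by
  induction k with
  | zero =>
    have h := gaussProd_eq_cfA_mul_add hα hα01 0
    rw [gaussProd_zero] at h
    simp only [cfQ, Nat.cast_one]
    linarith
  | succ k ih =>
    rw [cfQ]
    push_cast
    linear_combination ih - (cfQ α (k + 1) : ℝ) * gaussProd_eq_cfA_mul_add hα hα01 (k + 1)

lemma inv_gaussProd_le (k : ℕ) : (gaussProd α k)⁻¹ ≤ 2 * cfQ α k := by
  have hpos := gaussProd_pos hα hα01 k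
  rw [inv_le_iff_one_le_mul₀ hpos]
  match k with
  | 0 => simp [cfQ, gaussProd_zero]
  | k + 1 =>
    have h := cfQ_mul_gaussProd_add hα hα01 k
    have hq : (cfQ α k : ℝ) ≤ cfQ α (k + 1) := by exact_mod_cast cfQ_le_cfQ_succ hα hα01 k
    nlinarith [gaussProd_succ_le hα hα01 (k + 1), gaussProd_pos hα hα01 (k + 2)]

lemma cfQ_mul_sub_cfP (k : ℕ) :
    (cfQ α k : ℝ) * α - cfP α k = (-1) ^ k * gaussProd α (k + 1) := by
  induction k using Nat.strong_induction_on with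
  | _ k ih =>
    match k with
    | 0 => simp [cfQ, cfP, gaussProd_one]
    | 1 =>
      have h := gaussProd_eq_cfA_mul_add hα hα01 0
      rw [gaussProd_zero, gaussProd_one] at h
      simp only [cfQ, cfP, Nat.cast_one]
      linarith
    | k + 2 =>
      have h := gaussProd_eq_cfA_mul_add hα hα01 (k + 1)
      rw [cfQ, cfP]
      push_cast
      linear_combination (cfA α (k + 2) : ℝ) * ih (k + 1) (by omega) + ih k (by omega)
        + (-1) ^ k * h

lemma le_cfQ (k : ℕ) : k ≤ cfQ α k := by
  induction k using Nat.strong_induction_on with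
  | _ k ih =>
    match k with
    | 0 => exact Nat.zero_le _
    | 1 => exact one_le_cfA hα hα01 0
    | k + 2 =>
      rw [cfQ]
      nlinarith [ih (k + 1) (by omega), one_le_cfA hα hα01 (k + 1), cfQ_pos hα hα01 k]

lemma div_four_le_log_cfQ (k : ℕ) : ((k / 4 : ℕ) : ℝ) ≤ log (cfQ α k) := by
  have hpow : (2 : ℝ) ^ (k / 2) ≤ cfQ α k := by exact_mod_cast two_pow_le_cfQ hα hα01 k
  have hlog := Real.log_le_log (by positivity) hpow
  rw [Real.log_pow] at hlog
  have hdiv : ((k / 2 / 2 : ℕ) : ℝ) ≤ ((k / 2 : ℕ) : ℝ) / 2 := Nat.cast_div_le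
  rw [Nat.div_div_eq_div_mul] at hdiv
  nlinarith [Real.log_two_gt_d9, (Nat.cast_nonneg (k / 2) : (0 : ℝ) ≤ _)]

/-- Write `m = u q_k + v q_{k+1}` (the determinant is `±1`); then `u ≠ 0`, `u v ≤ 0`, and
`m α - z = ±(u β_{k+1} - v β_{k+2})` with both terms of the same sign, where `β = gaussProd α`. -/
lemma gaussProd_le_abs_mul_sub (k : ℕ) {m : ℕ} (hm0 : 0 < m) (hm : m < cfQ α (k + 1)) (z : ℤ) :
    gaussProd α (k + 1) ≤ |m * α - z| := by
  set s : ℤ := (-1) ^ k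
  have hs : s * s = 1 := by rw [← pow_add, ← two_mul, pow_mul]; norm_num
  have hdet := cfP_mul_cfQ_sub α k
  set u : ℤ := s * (m * cfP α (k + 1) - z * cfQ α (k + 1))
  set v : ℤ := -s * (m * cfP α k - z * cfQ α k)
  have hmuv : (m : ℤ) = u * cfQ α k + v * cfQ α (k + 1) := by
    linear_combination (-(s * m)) * hdet - m * hs
  have hzuv : z = u * cfP α k + v * cfP α (k + 1) := by
    linear_combination (-(s * z)) * hdet - z * hs
  obtain ⟨hu, huv⟩ := ne_zero_and_mul_nonpos_of_eq_add (by exact_mod_cast cfQ_pos hα hα01 k)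
    (by exact_mod_cast hm0) (by exact_mod_cast hm) hmuv
  have hmuvR : (m : ℝ) = u * cfQ α k + v * cfQ α (k + 1) := by exact_mod_cast hmuv
  have hzuvR : (z : ℝ) = u * cfP α k + v * cfP α (k + 1) := by exact_mod_cast hzuv
  have huvR : (u : ℝ) * v ≤ 0 := by exact_mod_cast huv
  have hβ1 := gaussProd_pos hα hα01 (k + 1)
  have hβ2 := gaussProd_pos hα hα01 (k + 2)
  have hsum : (m : ℝ) * α - z = (-1) ^ k * (u * gaussProd α (k + 1) - v * gaussProd α (k + 2)) := by
    linear_combination α * hmuvR - hzuvR + u * cfQ_mul_sub_cfP hα hα01 k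
      + v * cfQ_mul_sub_cfP hα hα01 (k + 1)
  have hu1 : gaussProd α (k + 1) ≤ |u * gaussProd α (k + 1)| := by
    rw [abs_mul, abs_of_pos hβ1]
    exact le_mul_of_one_le_left hβ1.le (by exact_mod_cast Int.one_le_abs hu)
  rw [hsum, abs_mul, abs_neg_one_pow, one_mul]
  refine hu1.trans (sq_le_sq.1 ?_)
  nlinarith [mul_nonneg (neg_nonneg.2 huvR) (mul_pos hβ1 hβ2).le]

lemma gaussProd_le_nd_natCast_mul {k m : ℕ} (hm0 : 0 < m) (hm : m < cfQ α k) :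
    gaussProd α k ≤ nd (m * α) := by
  cases k with
  | zero => simp [cfQ] at hm; omega
  | succ k => exact gaussProd_le_abs_mul_sub hα hα01 k hm0 hm _

lemma gaussProd_le_nd_intCast_mul {k : ℕ} {n : ℤ} (hn : n ≠ 0) (hnk : |n| < cfQ α k) :
    gaussProd α k ≤ nd (n * α) := by
  obtain ⟨m, rfl | rfl⟩ := Int.eq_nat_or_neg n
  · exact_mod_cast gaussProd_le_nd_natCast_mul hα hα01 (by omega) (by simpa using hnk)
  · rw [Int.cast_neg, neg_mul, nd_neg]
    exact_mod_cast gaussProd_le_nd_natCast_mul hα hα01 (by omega) (by simpa using hnk)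

lemma gaussProd_le_nd_sub {k m m' : ℕ} (hne : m ≠ m') (hlt : m < m' + cfQ α k)
    (hlt' : m' < m + cfQ α k) : gaussProd α k ≤ nd (m * α - m' * α) := by
  have h := gaussProd_le_nd_intCast_mul hα hα01 (k := k) (n := m - m') (by omega)
    (abs_lt.2 ⟨by omega, by omega⟩)
  rwa [Int.cast_sub, Int.cast_natCast, Int.cast_natCast, sub_mul] at h

lemma card_filter_nd_mem_Ico_le (k M : ℕ) (c : ℝ) :
    #{m ∈ Icc 1 M | nd (↑m * α) ∈ Set.Ico c (c + gaussProd α k)} ≤ 2 * (M / cfQ α k + 1) := by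
  have hq := cfQ_pos hα hα01 k
  have hclose : ∀ m m' : ℕ, m / cfQ α k = m' / cfQ α k → m < m' + cfQ α k := fun m m' h => by
    have h1 := Nat.div_add_mod m (cfQ α k)
    have h2 := Nat.div_add_mod m' (cfQ α k)
    have h3 := Nat.mod_lt m hq
    rw [h] at h1
    omega
  refine (card_le_mul_card_image_of_maps_to (f := (· / cfQ α k)) (t := range (M / cfQ α k + 1))
    (fun m hm => ?_) 2 fun b _ => ?_).trans (by rw [card_range])
  · rw [mem_filter, mem_Icc] at hm
    exact mem_range.2 (Nat.lt_succ_of_le (Nat.div_le_div_right hm.1.2))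
  · refine card_le_two_of_nd_mem_Ico _ (fun m : ℕ => m * α) (fun m hm m' hm' hne => ?_)
      fun m hm => (mem_filter.1 (mem_filter.1 hm).1).2
    simp only [mem_filter] at hm hm'
    exact gaussProd_le_nd_sub hα hα01 hne (hclose m m' (hm.2.trans hm'.2.symm))
      (hclose m' m (hm'.2.trans hm.2.symm))

lemma S_le_harmonic_div_gaussProd {k M : ℕ} (hMq : M < cfQ α (k + 1)) :
    S α M ≤ ((2 * (M / cfQ α k + 1) : ℕ) : ℝ)
      * (1 / gaussProd α (k + 1) + harmonic (cfQ α k) / gaussProd α k) := by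
  have hδ := gaussProd_pos hα hα01 k
  have hδq := inv_gaussProd_le hα hα01 k
  rw [inv_le_iff_one_le_mul₀ hδ] at hδq
  exact sum_one_div_le_of_card_layer_le (Icc 1 M) (fun m : ℕ => nd (m * α))
    (gaussProd_pos hα hα01 _) hδ _ _
    (fun m hm => gaussProd_le_nd_natCast_mul hα hα01 (mem_Icc.1 hm).1
      ((mem_Icc.1 hm).2.trans_lt hMq))
    (fun m _ => by have := abs_sub_round ((m : ℝ) * α); simp only [nd]; nlinarith)
    (fun j => by simpa only [add_mul, one_mul] using card_filter_nd_mem_Ico_le hα hα01 k M _)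

lemma S_le_mul_add_cfA {k M : ℕ} (hqM : cfQ α k ≤ M) (hMq : M < cfQ α (k + 1)) :
    S α M ≤ 8 * M * (2 + log M + cfA α (k + 1)) := by
  set q := cfQ α k
  set R : ℕ := 2 * (M / q + 1)
  have hq : (0 : ℝ) < q := by exact_mod_cast cfQ_pos hα hα01 k
  have hδ := gaussProd_pos hα hα01 k
  have hδq := inv_gaussProd_le hα hα01 k
  have hγq : (gaussProd α (k + 1))⁻¹ ≤ 2 * ((cfA α (k + 1) + 1) * q) := by
    have := inv_gaussProd_le hα hα01 (k + 1)
    have h : (cfQ α (k + 1) : ℝ) ≤ (cfA α (k + 1) + 1) * q := by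
      exact_mod_cast cfQ_succ_le hα hα01 k
    linarith
  have hH : (harmonic q : ℝ) ≤ 1 + log M := (harmonic_le_one_add_log q).trans (by gcongr)
  have hH0 : (0 : ℝ) ≤ harmonic q := Rat.cast_nonneg.2 (harmonic_pos (cfQ_pos hα hα01 k).ne').le
  have hRq : (R : ℝ) * q ≤ 4 * M := by
    have := Nat.div_mul_le_self M q
    exact_mod_cast (show R * q ≤ 4 * M by simp only [R]; nlinarith)
  calc S α M ≤ R * (1 / gaussProd α (k + 1) + harmonic q / gaussProd α k) :=
        S_le_harmonic_div_gaussProd hα hα01 hMq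
    _ ≤ R * (2 * ((cfA α (k + 1) + 1) * q) + (1 + log M) * (2 * q)) := by
        rw [one_div, div_eq_mul_inv]
        gcongr
    _ = 2 * (R * q) * (2 + log M + cfA α (k + 1)) := by ring
    _ ≤ 2 * (4 * M) * (2 + log M + cfA α (k + 1)) := by
        have : (0 : ℝ) ≤ log M := Real.log_natCast_nonneg M
        gcongr
    _ = 8 * M * (2 + log M + cfA α (k + 1)) := by ring

lemma lt_cfQ_cfIndex_succ (M : ℕ) : M < cfQ α (cfIndex α M + 1) := by
  by_contra! h
  have := Nat.le_findGreatest (P := fun k => cfQ α k ≤ M) ((le_cfQ hα hα01 _).trans h) h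
  exact (Nat.lt_succ_self _).not_ge this

lemma tendsto_cfIndex_atTop : Tendsto (cfIndex α) atTop atTop :=
  tendsto_atTop.2 fun k => eventually_atTop.2 ⟨cfQ α k, fun _ hM =>
    Nat.le_findGreatest ((le_cfQ hα hα01 k).trans hM) hM⟩

variable {φ : ℝ → ℝ} (hpos : ∀ x, 0 < φ x) (hmono : Monotone φ)
include hpos hmono

lemma eventually_cfA_cfIndex_le {c : ℝ} (hc : 0 ≤ c)
    (h : ∀ᶠ k in atTop, (cfA α (k + 1) : ℝ) ≤ 1 + c * ((k / 4 : ℕ) * φ (k / 4 : ℕ))) :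
    ∀ᶠ M : ℕ in atTop, (cfA α (cfIndex α M + 1) : ℝ) ≤ 1 + c * (log M * φ (log M)) := by
  filter_upwards [(tendsto_cfIndex_atTop hα hα01).eventually h, eventually_ge_atTop 1]
    with M hM hM1
  have hw : ((cfIndex α M / 4 : ℕ) : ℝ) ≤ log M :=
    (div_four_le_log_cfQ hα hα01 _).trans <| Real.log_le_log
      (by exact_mod_cast cfQ_pos hα hα01 _) (by exact_mod_cast cfQ_cfIndex_le hM1)
  have hφ := hpos (cfIndex α M / 4 : ℕ)
  refine hM.trans ?_
  gcongr
  exact hmono hw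

lemma tendsto_S_div_of_cfA_le
    (hφ : Tendsto φ atTop atTop)
    (h : ∀ n : ℕ, ∀ᶠ k in atTop,
      (cfA α (k + 1) : ℝ) ≤ 1 + ((n : ℝ) + 1)⁻¹ * ((k / 4 : ℕ) * φ (k / 4 : ℕ))) :
    Tendsto (fun M : ℕ => S α M / (M * log M * φ (log M))) atTop (𝓝 0) := by
  have hlog : Tendsto (fun M : ℕ => log M) atTop atTop :=
    tendsto_log_atTop.comp tendsto_natCast_atTop_atTop
  have hnonneg : ∀ M : ℕ, 0 ≤ S α M / (M * log M * φ (log M)) := fun M =>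
    div_nonneg (sum_nonneg fun m _ => one_div_nonneg.2 (abs_nonneg _))
      (mul_nonneg (mul_nonneg M.cast_nonneg (Real.log_natCast_nonneg M)) (hpos _).le)
  refine tendsto_order.2 ⟨fun ε hε => .of_forall fun M => hε.trans_le (hnonneg M),
    fun ε hε => ?_⟩
  obtain ⟨n, hn⟩ := exists_nat_one_div_lt (show 0 < ε / 32 by positivity)
  filter_upwards [eventually_cfA_cfIndex_le hα hα01 hpos hmono (by positivity) (h n),
    eventually_ge_atTop 1, hlog.eventually_ge_atTop 3, (hφ.comp hlog).eventually_ge_atTop (64 / ε)]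
    with M hcfA hM hL hφL
  simp only [Function.comp_apply] at hφL
  set L := log M
  have hφ0 := hpos L
  have hM0 : (0 : ℝ) ≤ M := M.cast_nonneg
  have hn' : ((n : ℝ) + 1)⁻¹ ≤ ε / 32 := by rw [← one_div]; exact hn.le
  have h64 : 64 ≤ ε * φ L := by rwa [div_le_iff₀' hε] at hφL
  refine (div_le_of_le_mul₀ (by positivity) (by positivity) ?_).trans_lt (half_lt_self hε)
  calc S α M ≤ 8 * M * (2 + L + cfA α (cfIndex α M + 1)) :=
        S_le_mul_add_cfA hα hα01 (cfQ_cfIndex_le hM) (lt_cfQ_cfIndex_succ hα hα01 M)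
    _ ≤ 8 * M * (3 + L + ε / 32 * (L * φ L)) := by
        refine mul_le_mul_of_nonneg_left ?_ (by positivity)
        linarith [mul_le_mul_of_nonneg_right hn' (by positivity : 0 ≤ L * φ L)]
    _ ≤ ε / 2 * (M * L * φ L) := by nlinarith [mul_nonneg hM0 (by positivity : (0 : ℝ) ≤ L)]

end IrrationalRotation

theorem growth_criterion_conv (φ : ℝ → ℝ) (hpos : ∀ x, 0 < φ x) (hmono : Monotone φ)
    (hsum : Summable (fun k : ℕ => 1 / ((k : ℝ) * φ k))) :
    ∀ᵐ α ∂(MeasureTheory.volume.restrict (Set.Ioo (0:ℝ) 1)),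
      Filter.limsup
        (fun M : ℕ => S α M / ((M : ℝ) * Real.log M * φ (Real.log M)))
        Filter.atTop = 0 := by
  have hcfA : ∀ n : ℕ, ∀ᵐ α ∂volume.restrict (Set.Ioo 0 1), ∀ᶠ k in atTop,
      (cfA α (k + 1) : ℝ) ≤ 1 + ((n : ℝ) + 1)⁻¹ * ((k / 4 : ℕ) * φ (k / 4 : ℕ)) := fun n =>
    ae_restrict_eventually_cfA_le _ (fun k => le_add_of_nonneg_right
      (by have := hpos (k / 4 : ℕ); positivity))
      (summable_one_div_one_add_mul hpos hsum (by positivity))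
  filter_upwards [ae_restrict_mem measurableSet_Ioo, ae_restrict_of_ae ae_irrational,
    ae_all_iff.2 hcfA] with α hα01 hα hαcfA
  exact (tendsto_S_div_of_cfA_le hα hα01 hpos hmono
    (tendsto_atTop_of_summable_one_div_mul hpos hmono hsum) hαcfA).limsup_eq
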